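/- For any HMS model M, the awareness maps π_a of the L-transform L(M) satisfy No Surprises: if π_a(w_X) = w_Y, then for all Z ⊆ X, π_a(w_Z) = w_{Z∩Y}. (This uses the PPK property of Π_a.) -/

import Mathlib

/-- Upward closure: for `D` a subset of the state-space `S`,
`D↑ = {w : S ⪯ st w and the projection of w to S lies in D}`. -/
def upcl {Ω Space : Type} [CompleteLattice Space] (st : Ω → Space)
    (proj : Space → Ω → Ω) (S : Space) (D : Set Ω) : Set Ω :=
  {w | S ≤ st w ∧ proj S w ∈ D}

/-- An HMS model: a complete lattice of (disjoint, nonempty) state-spaces over the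
states `Ω` (`st w` is the space of state `w`), surjective commuting projections
`proj S : {w : S ⪯ st w} → S`, possibility correspondences `Pi a` (with `PiSp a w`
the space containing `Pi a w`) satisfying Confinement, Generalized Reflexivity,
Stationarity, Projections Preserve Ignorance and Projections Preserve Knowledge,
and a valuation `val` into events (`valSp p` is the base space of the event `val p`,
so atom `p` has defined truth value at `s` iff `valSp p ⪯ st s`). -/
structure HMSModel (Ag At Ω Space : Type) [CompleteLattice Space] where
  st : Ω → Space
  space_nonempty : ∀ S : Space, ∃ w, st w = S
  proj : Space → Ω → Ω
  proj_st : ∀ (S : Space) (w : Ω), S ≤ st w → st (proj S w) = S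
  proj_self : ∀ w : Ω, proj (st w) w = w
  proj_comm : ∀ (S S' : Space) (w : Ω), S ≤ S' → S' ≤ st w →
    proj S (proj S' w) = proj S w
  proj_surj : ∀ (S S' : Space), S ≤ S' → ∀ s : Ω, st s = S →
    ∃ w : Ω, st w = S' ∧ proj S w = s
  Pi : Ag → Ω → Set Ω
  PiSp : Ag → Ω → Space
  Pi_space : ∀ (a : Ag) (w v : Ω), v ∈ Pi a w → st v = PiSp a w
  conf : ∀ (a : Ag) (w : Ω), PiSp a w ≤ st w
  gref : ∀ (a : Ag) (w : Ω), proj (PiSp a w) w ∈ Pi a w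
  stat : ∀ (a : Ag) (w v : Ω), v ∈ Pi a w → Pi a v = Pi a w ∧ PiSp a v = PiSp a w
  ppi : ∀ (a : Ag) (w : Ω) (S : Space), S ≤ st w →
    upcl st proj (PiSp a w) (Pi a w) ⊆
      upcl st proj (PiSp a (proj S w)) (Pi a (proj S w))
  ppk : ∀ (a : Ag) (w : Ω) (S : Space), S ≤ PiSp a w →
    (proj S) '' (Pi a w) = Pi a (proj S w)
  valSp : At → Space
  val : At → Set Ω
  val_space : ∀ (p : At) (s : Ω), s ∈ val p → valSp p ≤ st s

variable {Ag At Ω Space : Type} [CompleteLattice Space]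

/-- `At(S)`: the atoms with defined truth value throughout the state-space `S`. -/
def HMSModel.AtS (M : HMSModel Ag At Ω Space) (S : Space) : Set At :=
  {p | M.valSp p ≤ S}

/-- The accessibility relation of the `L`-transform of an HMS model, on the worlds of
the maximal state-space `T = ⊤`: `(w,v) ∈ R_a` iff `r^T_{S(Π_a(w))}(v) ∈ Π_a(w)`. -/
def HMSModel.Rt (M : HMSModel Ag At Ω Space) (a : Ag) (w v : Ω) : Prop :=
  M.proj (M.PiSp a w) v ∈ M.Pi a w

/-!
For `S ⪯ st v`, the space of `Π_a(r_S(v))` is `S ⊓ S(Π_a(v))`: Projections Preserve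
Ignorance gives `⪯`, and Projections Preserve Knowledge at `S ⊓ S(Π_a(v)) ⪯ S(Π_a(v))`
gives `⪰`. Minimality of `S_Z` gives `S_Z ⪯ S_X`, so `r_{S_Z}(w) = r_{S_Z}(r_{S_X}(w))`
and hence `S_{Y'} = S_Z ⊓ S_Y`, which `At` turns into `Z ∩ Y`.
-/

namespace HMSModel

variable (M : HMSModel Ag At Ω Space)

theorem AtS_inf (S T : Space) : M.AtS (S ⊓ T) = M.AtS S ∩ M.AtS T :=
  Set.ext fun _ => le_inf_iff

theorem le_of_subset_AtS {Z : Set At} {SZ T : Space}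
    (hSZ : IsLeast {S : Space | M.AtS S = Z} SZ) (hZT : Z ⊆ M.AtS T) : SZ ≤ T := by
  have hAt : M.AtS (SZ ⊓ T) = Z := by
    rw [AtS_inf, hSZ.1, Set.inter_eq_left.mpr hZT]
  exact (hSZ.2 hAt).trans inf_le_right

theorem PiSp_eq_of_Pi_subset {a : Ag} {w : Ω} {S : Space}
    (h : M.Pi a w ⊆ {u | M.st u = S}) : M.PiSp a w = S :=
  (M.Pi_space a w _ (M.gref a w)).symm.trans (h (M.gref a w))

theorem PiSp_proj_le (a : Ag) {w : Ω} {S : Space} (hS : S ≤ M.st w) :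
    M.PiSp a (M.proj S w) ≤ M.PiSp a w := by
  set u := M.proj (M.PiSp a w) w
  have hu : M.st u = M.PiSp a w := M.Pi_space a w u (M.gref a w)
  have hu_upcl : u ∈ upcl M.st M.proj (M.PiSp a w) (M.Pi a w) := by
    refine ⟨hu.ge, ?_⟩
    rw [← hu, M.proj_self]
    exact M.gref a w
  exact hu ▸ (M.ppi a w S hS hu_upcl).1

theorem PiSp_proj_of_le_PiSp (a : Ag) {w : Ω} {S : Space} (hS : S ≤ M.PiSp a w) :
    M.PiSp a (M.proj S w) = S := by
  set u := M.proj (M.PiSp a w) w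
  have hu : M.st u = M.PiSp a w := M.Pi_space a w u (M.gref a w)
  have hmem : M.proj S u ∈ M.Pi a (M.proj S w) :=
    M.ppk a w S hS ▸ Set.mem_image_of_mem _ (M.gref a w)
  rw [← M.Pi_space a _ _ hmem, M.proj_st S u (hu ▸ hS)]

theorem PiSp_proj (a : Ag) {w : Ω} {S : Space} (hS : S ≤ M.st w) :
    M.PiSp a (M.proj S w) = S ⊓ M.PiSp a w := by
  refine le_antisymm (le_inf ?_ (M.PiSp_proj_le a hS)) ?_
  · exact (M.conf a _).trans_eq (M.proj_st S w hS)
  · set T := S ⊓ M.PiSp a w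
    have hT : M.proj T (M.proj S w) = M.proj T w := M.proj_comm T S w inf_le_left hS
    calc T = M.PiSp a (M.proj T w) := (M.PiSp_proj_of_le_PiSp a inf_le_right).symm
      _ = M.PiSp a (M.proj T (M.proj S w)) := by rw [hT]
      _ ≤ M.PiSp a (M.proj S w) :=
        M.PiSp_proj_le a ((M.proj_st S w hS).symm ▸ inf_le_left)

end HMSModel

/-- `π_a(w_X) = w_Y` is encoded by `S_X = min {S : At(S) = X}`, `Π_a(r_{S_X}(w)) ⊆ S_Y` and
`Y = At(S_Y)`; likewise `π_a(w_Z) = w_{At(S_{Y'})}`. -/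
theorem Ltransform_noSurprises (M : HMSModel Ag At Ω Space) (a : Ag)
    (w : Ω) (hw : M.st w = ⊤) (X Y Z : Set At) (SX SZ SY SY' : Space)
    (hSX : IsLeast {S : Space | M.AtS S = X} SX)
    (hSZ : IsLeast {S : Space | M.AtS S = Z} SZ)
    (hZX : Z ⊆ X)
    (hSY : M.Pi a (M.proj SX w) ⊆ {u | M.st u = SY})
    (hY : M.AtS SY = Y)
    (hSY' : M.Pi a (M.proj SZ w) ⊆ {u | M.st u = SY'}) :
    M.AtS SY' = Z ∩ Y := by
  have hSX_le : SX ≤ M.st w := hw ▸ le_top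
  have hSZ_le : SZ ≤ SX := M.le_of_subset_AtS hSZ (hSX.1 ▸ hZX)
  have hSY'_eq : SY' = SZ ⊓ SY := by
    rw [← M.PiSp_eq_of_Pi_subset hSY', ← M.PiSp_eq_of_Pi_subset hSY,
      ← M.proj_comm SZ SX w hSZ_le hSX_le,
      M.PiSp_proj a ((M.proj_st SX w hSX_le).symm ▸ hSZ_le)]
  rw [hSY'_eq, M.AtS_inf, hSZ.1, hY]
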